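/- A relation β over guarded processes of the prioritized basic calculus is a weak bisimulation if and only if: whenever (P,Q) ∈ β, (i) each P --α--> P' (α standard) is matched by Q ==α̂==> Q' with (P',Q') ∈ β; (ii) each P --δ--> P' is matched either by Q --τ--> (some τ move of Q) or by Q --δ--> (--τ-->)* Q' with (P',Q') ∈ β; and symmetrically. -/

import Mathlib

/-!
A δ-move of `P` already tells us that `P` has no τ-move, by priority. So when the partner `Q`
answers with a τ-move `Q → Q''`, the matching of that τ-move can only be `P` standing still,
and `(P, Q'')` is again related. Repeating, `Q` walks along a τ-path until it answers with a
δ-move; this terminates because a τ-move of a closed guarded process strictly lowers its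
τ-depth, the maximal nesting of τ-prefixes that lie below no other prefix.
-/

namespace PrioCalc

inductive Act where
  | tau : Act
  | vis : ℕ → Act
  | delta : Act
deriving DecidableEq

inductive Expr where
  | nil : Expr
  | var : ℕ → Expr
  | pre : Act → Expr → Expr
  | sum : Expr → Expr → Expr
  | recur : ℕ → Expr → Expr
  | pri : Expr → Expr
deriving DecidableEq

/-- Syntactic substitution of `F` for the free occurrences of variable `x`. -/
def subst : Expr → ℕ → Expr → Expr
  | .nil, _, _ => .nil
  | .var m, x, F => if m = x then F else .var m
  | .pre γ E, x, F => .pre γ (subst E x F)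
  | .sum E G, x, F => .sum (subst E x F) (subst G x F)
  | .recur y E, x, F => if y = x then .recur y E else .recur y (subst E x F)
  | .pri E, x, F => .pri (subst E x F)

/-- `free E x` : `x` occurs free in `E`. -/
def free : Expr → ℕ → Prop
  | .nil, _ => False
  | .var m, x => m = x
  | .pre _ E, x => free E x
  | .sum E G, x => free E x ∨ free G x
  | .recur y E, x => x ≠ y ∧ free E x
  | .pri E, x => free E x

def Closed (E : Expr) : Prop := ∀ x, ¬ free E x

/-- Standard (non-δ) transitions; these never depend on δ-transitions. -/
inductive StepStd : Expr → Act → Expr → Prop where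
  | pre {α : Act} (h : α ≠ Act.delta) (E : Expr) : StepStd (.pre α E) α E
  | sumL {P α P'} (Q : Expr) : StepStd P α P' → StepStd (.sum P Q) α P'
  | sumR {Q α Q'} (P : Expr) : StepStd Q α Q' → StepStd (.sum P Q) α Q'
  | unf {x E γ P'} : StepStd (subst E x (.recur x E)) γ P' → StepStd (.recur x E) γ P'
  | pri {P α P'} : StepStd P α P' → StepStd (.pri P) α P'

def CanTau (P : Expr) : Prop := ∃ P', StepStd P Act.tau P'

/-- δ-transitions (stratified: the negative premise refers to standard transitions). -/
inductive StepDel : Expr → Expr → Prop where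
  | pre (E : Expr) : StepDel (.pre Act.delta E) E
  | sumL {P P'} (Q : Expr) : StepDel P P' → ¬ CanTau Q → StepDel (.sum P Q) P'
  | sumR {Q Q'} (P : Expr) : StepDel Q Q' → ¬ CanTau P → StepDel (.sum P Q) Q'
  | unf {x E P'} : StepDel (subst E x (.recur x E)) P' → StepDel (.recur x E) P'

/-- The full (prioritized) transition relation. -/
def Step (P : Expr) (γ : Act) (Q : Expr) : Prop :=
  if γ = Act.delta then StepDel P Q else StepStd P γ Q

def TauStar : Expr → Expr → Prop :=
  Relation.ReflTransGen (fun P Q => Step P Act.tau Q)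

/-- Weak transition `==γ==>` : τ* γ τ* (at least one γ step). -/
def Weak (P : Expr) (γ : Act) (Q : Expr) : Prop :=
  ∃ P₁ P₂, TauStar P P₁ ∧ Step P₁ γ P₂ ∧ TauStar P₂ Q

/-- Weak transition `==γ̂==>`. -/
def WeakHat (P : Expr) (γ : Act) (Q : Expr) : Prop :=
  if γ = Act.tau then TauStar P Q else Weak P γ Q

def IsWeakBisim (β : Expr → Expr → Prop) : Prop :=
  ∀ P Q, β P Q →
    (∀ γ P', Step P γ P' → ∃ Q', WeakHat Q γ Q' ∧ β P' Q') ∧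
    (∀ γ Q', Step Q γ Q' → ∃ P', WeakHat P γ P' ∧ β P' Q')

/-- Weak bisimilarity `≈`. -/
def WBisim (P Q : Expr) : Prop := ∃ β, IsWeakBisim β ∧ β P Q

/-- Observational congruence `≃`. -/
def ObsCong (P Q : Expr) : Prop :=
  (∀ γ P', Step P γ P' → ∃ Q', Weak Q γ Q' ∧ WBisim P' Q') ∧
  (∀ γ Q', Step Q γ Q' → ∃ P', Weak P γ P' ∧ WBisim P' Q')

/-- Terms of the basic calculus (no occurrence of the auxiliary `pri` operator). -/
def PriFree : Expr → Prop
  | .nil => True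
  | .var _ => True
  | .pre _ E => PriFree E
  | .sum E F => PriFree E ∧ PriFree F
  | .recur _ E => PriFree E
  | .pri _ => False

/-- Every free occurrence of `x` in `E` is (strongly) guarded. -/
def GVar : Expr → ℕ → Prop
  | .nil, _ => True
  | .var m, x => m ≠ x
  | .pre γ E, x => γ = Act.tau → GVar E x
  | .sum E F, x => GVar E x ∧ GVar F x
  | .recur y E, x => y ≠ x → GVar E x
  | .pri E, x => GVar E x

/-- `E` is (strongly) guarded: every recursion subterm is guarded. -/
def Guarded : Expr → Prop
  | .nil => True
  | .var _ => True
  | .pre _ E => Guarded E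
  | .sum E F => Guarded E ∧ Guarded F
  | .recur y E => GVar E y ∧ Guarded E
  | .pri E => Guarded E

/-- Some free occurrence of `x` in `E` is unguarded (not under a non-τ prefix). -/
def UnguardedVar : Expr → ℕ → Prop
  | .nil, _ => False
  | .var m, x => m = x
  | .pre γ E, x => γ = Act.tau ∧ UnguardedVar E x
  | .sum E F, x => UnguardedVar E x ∨ UnguardedVar F x
  | .recur y E, x => y ≠ x ∧ UnguardedVar E x
  | .pri E, x => UnguardedVar E x

/-- `x` is serial in `E` : every subexpression containing `x` free, apart from `x`
itself, is a prefix, a sum or a recursion. -/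
def SerialVar : Expr → ℕ → Prop
  | .nil, _ => True
  | .var _, _ => True
  | .pre _ E, x => SerialVar E x
  | .sum E F, x => SerialVar E x ∧ SerialVar F x
  | .recur y E, x => y = x ∨ SerialVar E x
  | .pri E, x => ¬ free E x

/-- Simultaneous substitution of closed terms for free variables. -/
def msubst : Expr → (ℕ → Expr) → Expr
  | .nil, _ => .nil
  | .var m, σ => σ m
  | .pre γ E, σ => .pre γ (msubst E σ)
  | .sum E F, σ => .sum (msubst E σ) (msubst F σ)
  | .recur y E, σ => .recur y (msubst E (Function.update σ y (.var y)))
  | .pri E, σ => .pri (msubst E σ)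

/-- Observational congruence on open terms (via closed substitutions). -/
def ObsCongO (E F : Expr) : Prop :=
  ∀ σ : ℕ → Expr, (∀ n, Closed (σ n)) → ObsCong (msubst E σ) (msubst F σ)

/-- The axiom system 𝒜. -/
inductive Prov : Expr → Expr → Prop where
  | refl (E) : Prov E E
  | symm {E F} : Prov E F → Prov F E
  | trans {E F G} : Prov E F → Prov F G → Prov E G
  | congPre (γ) {E F} : Prov E F → Prov (.pre γ E) (.pre γ F)
  | congSum {E E' F F'} : Prov E E' → Prov F F' → Prov (.sum E F) (.sum E' F')
  | congRec (x) {E F} : Prov E F → Prov (.recur x E) (.recur x F)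
  | congPri {E F} : Prov E F → Prov (.pri E) (.pri F)
  | a1 (E F) : Prov (.sum E F) (.sum F E)
  | a2 (E F G) : Prov (.sum (.sum E F) G) (.sum E (.sum F G))
  | a3 (E) : Prov (.sum E E) E
  | a4 (E) : Prov (.sum E .nil) E
  | tau1 (γ E) : Prov (.pre γ (.pre Act.tau E)) (.pre γ E)
  | tau2 (E) : Prov (.sum E (.pre Act.tau E)) (.pre Act.tau E)
  | tau3 (γ E F) :
      Prov (.sum (.pre γ (.sum E (.pre Act.tau F))) (.pre γ F))
           (.pre γ (.sum E (.pre Act.tau F)))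
  | pri1 : Prov (.pri .nil) .nil
  | pri2 {α} (h : α ≠ Act.delta) (E) : Prov (.pri (.pre α E)) (.pre α E)
  | pri3 (E) : Prov (.pri (.pre Act.delta E)) .nil
  | pri4 (E F) : Prov (.pri (.sum E F)) (.sum (.pri E) (.pri F))
  | pri5 (E) : Prov (.pri (.pri E)) (.pri E)
  | pri6 (E F) : Prov (.sum (.pre Act.tau E) F) (.sum (.pre Act.tau E) (.pri F))
  | rec1 (x E) : Prov (.recur x E) (subst E x (.recur x E))
  | rec2 {x E F} (hs : SerialVar E x) (hg : GVar E x) :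
      Prov F (subst E x F) → Prov F (.recur x E)
  | ung1 (x E) : Prov (.recur x (.sum (.var x) E)) (.recur x E)
  | ung2 (x E) :
      Prov (.recur x (.sum (.pre Act.tau (.var x)) E)) (.recur x (.pre Act.tau (.pri E)))
  | ung3 (x E F) :
      Prov (.recur x (.sum (.pre Act.tau (.sum (.var x) E)) F))
           (.recur x (.sum (.sum (.pre Act.tau (.var x)) E) F))
  | ung4 (x E F) :
      Prov (.recur x (.sum (.pre Act.tau (.sum (.pri (.var x)) E)) F))
           (.recur x (.sum (.sum (.pre Act.tau (.var x)) E) F))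

/-- Standard equation sets: formal variables are `X i = var i` for `i < n`,
free variables are variables `≥ n`. -/
structure StdEqSet (n : ℕ) where
  pres : Fin n → List (Act × Fin n)
  frees : Fin n → List ℕ
  frees_ge : ∀ i, ∀ w ∈ frees i, n ≤ w

/-- The body `H_i{Ẽ/X̃}` of the `i`-th equation with expressions `Es` for the
formal variables. -/
def instBody {n : ℕ} (S : StdEqSet n) (Es : Fin n → Expr) (i : Fin n) : Expr :=
  (S.pres i).foldr (fun p acc => Expr.sum (Expr.pre p.1 (Es p.2)) acc)
    ((S.frees i).foldr (fun w acc => Expr.sum (Expr.var w) acc) Expr.nil)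

/-- `E` provably satisfies `S` (distinguished variable `X 0`). -/
def ProvSat {n : ℕ} (hn : 0 < n) (E : Expr) (S : StdEqSet n) : Prop :=
  ∃ Es : Fin n → Expr, Es ⟨0, hn⟩ = E ∧
    (∀ i x, free (Es i) x → n ≤ x) ∧
    (∀ i, Prov (Es i) (instBody S Es i))

/-- No equation contains both a τ-prefixed and a δ-prefixed summand. -/
def Prioritized {n : ℕ} (S : StdEqSet n) : Prop :=
  ∀ i, (∃ j, (Act.tau, j) ∈ S.pres i) → ∀ j, (Act.delta, j) ∉ S.pres i

/-- No cycle of unguarded (i.e. τ-prefixed) dependencies. -/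
def EqGuarded {n : ℕ} (S : StdEqSet n) : Prop :=
  ∀ i : Fin n, ¬ Relation.TransGen (fun i j : Fin n => (Act.tau, j) ∈ S.pres i) i i

/-- Delete every δ-prefixed summand from equations that also contain a
τ-prefixed summand. -/
def prioritize {n : ℕ} (S : StdEqSet n) : StdEqSet n where
  pres i := if (S.pres i).any (fun p => decide (p.1 = Act.tau))
            then (S.pres i).filter (fun p => decide (p.1 ≠ Act.delta))
            else S.pres i
  frees := S.frees
  frees_ge := S.frees_ge


theorem step_tau_iff {P Q : Expr} : Step P Act.tau Q ↔ StepStd P Act.tau Q := by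
  simp [Step]

theorem step_delta_iff {P Q : Expr} : Step P Act.delta Q ↔ StepDel P Q := by
  simp [Step]

theorem weakHat_tau_iff {P Q : Expr} : WeakHat P Act.tau Q ↔ TauStar P Q := by
  simp [WeakHat]

theorem weakHat_delta_iff {P Q : Expr} : WeakHat P Act.delta Q ↔ Weak P Act.delta Q := by
  simp [WeakHat]

theorem StepDel.not_canTau {P P' : Expr} (h : StepDel P P') : ¬ CanTau P := by
  induction h with
  | pre E => rintro ⟨_, ⟨⟩⟩
  | sumL Q _ hQ ih =>
    rintro ⟨_, hτ⟩
    cases hτ with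
    | sumL _ hτ => exact ih ⟨_, hτ⟩
    | sumR _ hτ => exact hQ ⟨_, hτ⟩
  | sumR P _ hP ih =>
    rintro ⟨_, hτ⟩
    cases hτ with
    | sumL _ hτ => exact hP ⟨_, hτ⟩
    | sumR _ hτ => exact ih ⟨_, hτ⟩
  | unf _ ih =>
    rintro ⟨_, hτ⟩
    cases hτ with
    | unf hτ => exact ih ⟨_, hτ⟩

theorem TauStar.eq_of_not_canTau {P P' : Expr} (h : TauStar P P') (hP : ¬ CanTau P) :
    P' = P := by
  rcases h.cases_head with rfl | ⟨P'', hτ, _⟩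
  · rfl
  · exact absurd ⟨P'', step_tau_iff.1 hτ⟩ hP

theorem Weak.exists_step_tau_or_step {P P' : Expr} {γ : Act} (h : Weak P γ P') :
    (∃ P'', Step P Act.tau P'') ∨ ∃ P₀, Step P γ P₀ ∧ TauStar P₀ P' := by
  obtain ⟨P₁, P₂, hP₁, hP₂, hP'⟩ := h
  rcases hP₁.cases_head with rfl | ⟨P'', hτ, _⟩
  exacts [Or.inr ⟨P₂, hP₂, hP'⟩, Or.inl ⟨P'', hτ⟩]

theorem Weak.head_tau {P P'' P' : Expr} {γ : Act} (hτ : Step P Act.tau P'')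
    (h : Weak P'' γ P') : Weak P γ P' := by
  obtain ⟨P₁, P₂, hP₁, hP₂, hP'⟩ := h
  exact ⟨P₁, P₂, .head hτ hP₁, hP₂, hP'⟩

theorem free_subst {E F : Expr} {x y : ℕ} (h : free (subst E x F) y) :
    (y ≠ x ∧ free E y) ∨ free F y := by
  induction E with
  | nil => exact h.elim
  | var m =>
    by_cases hm : m = x
    · simp only [subst, hm, if_true] at h
      exact Or.inr h
    · simp only [subst, hm, if_false, free] at h
      exact Or.inl ⟨h ▸ hm, h⟩
  | pre γ E ih => exact ih h
  | sum E G ihE ihG =>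
    rcases h with h | h
    · exact (ihE h).imp_left fun ⟨hyx, hE⟩ => ⟨hyx, Or.inl hE⟩
    · exact (ihG h).imp_left fun ⟨hyx, hG⟩ => ⟨hyx, Or.inr hG⟩
  | recur z E ih =>
    by_cases hz : z = x
    · subst hz
      simp only [subst, if_true] at h
      exact Or.inl ⟨h.1, h⟩
    · simp only [subst, hz, if_false, free] at h
      exact (ih h.2).imp_left fun ⟨hyx, hE⟩ => ⟨hyx, h.1, hE⟩
  | pri E ih => exact ih h

theorem Closed.sum_left {P Q : Expr} (h : Closed (.sum P Q)) : Closed P :=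
  fun y hy => h y (Or.inl hy)

theorem Closed.sum_right {P Q : Expr} (h : Closed (.sum P Q)) : Closed Q :=
  fun y hy => h y (Or.inr hy)

theorem Closed.unfold {x : ℕ} {E : Expr} (h : Closed (.recur x E)) :
    Closed (subst E x (.recur x E)) := by
  intro y hy
  rcases free_subst hy with hE | hrec
  exacts [h y hE, h y hrec]

theorem gVar_of_not_free {F : Expr} {y : ℕ} (h : ¬ free F y) : GVar F y := by
  induction F with
  | nil => trivial
  | var m => exact h
  | pre γ E ih => exact fun _ => ih h
  | sum E G ihE ihG =>
    simp only [free, not_or] at h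
    exact ⟨ihE h.1, ihG h.2⟩
  | recur z E ih => exact fun hzy => ih fun hE => h ⟨Ne.symm hzy, hE⟩
  | pri E ih => exact ih h

theorem gVar_subst {E F : Expr} {x y : ℕ} (hE : GVar E y) (hF : GVar F y) :
    GVar (subst E x F) y := by
  induction E with
  | nil => trivial
  | var m =>
    by_cases hm : m = x
    · simpa [subst, hm] using hF
    · simpa [subst, hm] using hE
  | pre γ E ih => exact fun hγ => ih (hE hγ)
  | sum E G ihE ihG => exact ⟨ihE hE.1, ihG hE.2⟩
  | recur z E ih =>
    by_cases hz : z = x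
    · simpa [subst, hz] using hE
    · simp only [subst, hz, if_false]
      exact fun hzy => ih (hE hzy)
  | pri E ih => exact ih hE

theorem guarded_subst {E F : Expr} {x : ℕ} (hE : Guarded E) (hF : Guarded F)
    (hFcl : Closed F) : Guarded (subst E x F) := by
  induction E with
  | nil => trivial
  | var m =>
    by_cases hm : m = x
    · simpa [subst, hm] using hF
    · simp [subst, hm, Guarded]
  | pre γ E ih => exact ih hE
  | sum E G ihE ihG => exact ⟨ihE hE.1, ihG hE.2⟩
  | recur z E ih =>
    by_cases hz : z = x
    · simpa [subst, hz] using hE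
    · simp only [subst, hz, if_false]
      exact ⟨gVar_subst hE.1 (gVar_of_not_free (hFcl z)), ih hE.2⟩
  | pri E ih => exact ih hE

theorem Guarded.unfold {x : ℕ} {E : Expr} (hg : Guarded (.recur x E))
    (hcl : Closed (.recur x E)) : Guarded (subst E x (.recur x E)) :=
  guarded_subst hg.2 hg hcl

def tauDepth : Expr → ℕ
  | .nil => 0
  | .var _ => 0
  | .pre γ E => if γ = Act.tau then tauDepth E + 1 else 0
  | .sum E F => max (tauDepth E) (tauDepth F)
  | .recur _ E => tauDepth E
  | .pri E => tauDepth E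

theorem tauDepth_subst {E F : Expr} {x : ℕ} (h : GVar E x) :
    tauDepth (subst E x F) = tauDepth E := by
  induction E with
  | nil => rfl
  | var m =>
    have hm : m ≠ x := h
    simp [subst, hm]
  | pre γ E ih =>
    by_cases hγ : γ = Act.tau
    · simp [subst, tauDepth, hγ, ih (h hγ)]
    · simp [subst, tauDepth, hγ]
  | sum E G ihE ihG => simp [subst, tauDepth, ihE h.1, ihG h.2]
  | recur z E ih =>
    by_cases hz : z = x
    · simp [subst, hz]
    · simp [subst, hz, tauDepth, ih (h hz)]
  | pri E ih => simp [subst, tauDepth, ih h]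

theorem StepStd.tauDepth_lt {P P' : Expr} (h : StepStd P Act.tau P') (hcl : Closed P)
    (hg : Guarded P) : tauDepth P' < tauDepth P := by
  generalize hγ : Act.tau = γ at h
  induction h with
  | pre _ E =>
    subst hγ
    simp [tauDepth]
  | sumL Q _ ih => exact (ih hcl.sum_left hg.1 hγ).trans_le (le_max_left _ _)
  | sumR P _ ih => exact (ih hcl.sum_right hg.2 hγ).trans_le (le_max_right _ _)
  | unf _ ih =>
    rw [tauDepth, ← tauDepth_subst hg.1]
    exact ih hcl.unfold (hg.unfold hcl) hγ
  | pri _ ih => exact ih hcl hg hγ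

section Matching

variable {R : Expr → Expr → Prop}

theorem exists_weak_delta_match (hguard : ∀ P Q, R P Q → Closed Q ∧ Guarded Q)
    (hdelta : ∀ P Q, R P Q → ∀ P', Step P Act.delta P' →
      (∃ Q'', Step Q Act.tau Q'') ∨
      ∃ Q₀ Q', Step Q Act.delta Q₀ ∧ TauStar Q₀ Q' ∧ R P' Q')
    (htau : ∀ P Q, R P Q → ∀ Q'', Step Q Act.tau Q'' → ∃ P₁, WeakHat P Act.tau P₁ ∧ R P₁ Q'')
    {P Q P' : Expr} (hPQ : R P Q) (hP : Step P Act.delta P') :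
    ∃ Q', Weak Q Act.delta Q' ∧ R P' Q' := by
  induction hn : tauDepth Q using Nat.strong_induction_on generalizing Q with
  | _ n ih =>
  rcases hdelta P Q hPQ P' hP with ⟨Q'', hQ⟩ | ⟨Q₀, Q', hQ₀, hQ', hPQ'⟩
  · obtain ⟨P₁, hPP₁, hP₁Q''⟩ := htau P Q hPQ Q'' hQ
    rw [(weakHat_tau_iff.1 hPP₁).eq_of_not_canTau (step_delta_iff.1 hP).not_canTau] at hP₁Q''
    have hlt := (step_tau_iff.1 hQ).tauDepth_lt (hguard P Q hPQ).1 (hguard P Q hPQ).2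
    obtain ⟨Q', hQQ', hPQ'⟩ := ih _ (hn ▸ hlt) hP₁Q'' rfl
    exact ⟨Q', hQQ'.head_tau hQ, hPQ'⟩
  · exact ⟨Q', ⟨Q, Q₀, .refl, hQ₀, hQ'⟩, hPQ'⟩

theorem weakHat_match_of_prioritized_match (hguard : ∀ P Q, R P Q → Closed Q ∧ Guarded Q)
    (hstd : ∀ P Q, R P Q → ∀ α P', α ≠ Act.delta → Step P α P' →
      ∃ Q', WeakHat Q α Q' ∧ R P' Q')
    (hdelta : ∀ P Q, R P Q → ∀ P', Step P Act.delta P' →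
      (∃ Q'', Step Q Act.tau Q'') ∨
      ∃ Q₀ Q', Step Q Act.delta Q₀ ∧ TauStar Q₀ Q' ∧ R P' Q')
    (htau : ∀ P Q, R P Q → ∀ Q'', Step Q Act.tau Q'' → ∃ P₁, WeakHat P Act.tau P₁ ∧ R P₁ Q'')
    {P Q : Expr} (hPQ : R P Q) (γ : Act) (P' : Expr) (hP : Step P γ P') :
    ∃ Q', WeakHat Q γ Q' ∧ R P' Q' := by
  by_cases hγ : γ = Act.delta
  · subst hγ
    obtain ⟨Q', hQQ', hPQ'⟩ := exists_weak_delta_match hguard hdelta htau hPQ hP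
    exact ⟨Q', weakHat_delta_iff.2 hQQ', hPQ'⟩
  · exact hstd P Q hPQ γ P' hγ hP

theorem delta_match_of_weakHat_match {Q P' Q' : Expr} (hPQ : R P' Q')
    (hQ : WeakHat Q Act.delta Q') :
    (∃ Q'', Step Q Act.tau Q'') ∨ ∃ Q₀ Q', Step Q Act.delta Q₀ ∧ TauStar Q₀ Q' ∧ R P' Q' :=
  (weakHat_delta_iff.1 hQ).exists_step_tau_or_step.imp_right
    fun ⟨Q₀, hQ₀, hQ'⟩ => ⟨Q₀, Q', hQ₀, hQ', hPQ⟩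

end Matching

/-- reformulation of weak bisimulation over guarded processes. -/
theorem weak_bisim_iff_over_guarded (β : Expr → Expr → Prop)
    (hdom : ∀ P Q, β P Q →
      (Closed P ∧ PriFree P ∧ Guarded P) ∧ (Closed Q ∧ PriFree Q ∧ Guarded Q)) :
    IsWeakBisim β ↔
      (∀ P Q, β P Q →
        (∀ α P', α ≠ Act.delta → Step P α P' →
          ∃ Q', WeakHat Q α Q' ∧ β P' Q') ∧
        (∀ P', Step P Act.delta P' →
          (∃ Q'', Step Q Act.tau Q'') ∨
          (∃ Q₀ Q', Step Q Act.delta Q₀ ∧ TauStar Q₀ Q' ∧ β P' Q')) ∧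
        (∀ α Q', α ≠ Act.delta → Step Q α Q' →
          ∃ P', WeakHat P α P' ∧ β P' Q') ∧
        (∀ Q', Step Q Act.delta Q' →
          (∃ P'', Step P Act.tau P'') ∨
          (∃ P₀ P', Step P Act.delta P₀ ∧ TauStar P₀ P' ∧ β P' Q'))) := by
  constructor
  · intro hB P Q hPQ
    obtain ⟨hfwd, hbwd⟩ := hB P Q hPQ
    refine ⟨fun α P' _ => hfwd α P', fun P' hP => ?_, fun α Q' _ => hbwd α Q', fun Q' hQ => ?_⟩
    · obtain ⟨Q', hQ, hR⟩ := hfwd _ _ hP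
      exact delta_match_of_weakHat_match hR hQ
    · obtain ⟨P', hP, hR⟩ := hbwd _ _ hQ
      exact delta_match_of_weakHat_match (R := flip β) hR hP
  · intro H P Q hPQ
    have hτ : Act.tau ≠ Act.delta := nofun
    constructor
    · exact weakHat_match_of_prioritized_match (R := β)
        (fun _ _ h => ⟨(hdom _ _ h).2.1, (hdom _ _ h).2.2.2⟩) (fun _ _ h => (H _ _ h).1)
        (fun _ _ h => (H _ _ h).2.1) (fun _ _ h Q'' => (H _ _ h).2.2.1 _ Q'' hτ) hPQ
    · exact weakHat_match_of_prioritized_match (R := flip β)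
        (fun _ _ h => ⟨(hdom _ _ h).1.1, (hdom _ _ h).1.2.2⟩) (fun _ _ h => (H _ _ h).2.2.1)
        (fun _ _ h => (H _ _ h).2.2.2) (fun _ _ h P'' => (H _ _ h).1 _ P'' hτ) hPQ

end PrioCalc
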